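/- arXiv:2207.09528 — 5 statements merged into one kernel-verified Lean document; each statement's English description precedes it below -/
import Mathlib

section
/- Fix an integer d ≥ 1 and let μ_d ≤ ℂˣ be the subgroup of d-th roots of unity. For (r₀, r₁, r₂) ∈ ℤ³, the group homomorphism χ_r : ℂˣ × μ_d × μ_d × μ_d → ℂˣ defined by χ_r(λ, ζ₀, ζ₁, ζ₂) = λ^{r₀+r₁+r₂}·ζ₀^{r₀}·ζ₁^{r₁}·ζ₂^{r₂} (integer powers of units via zpow) is the trivial homomorphism if and only if (r₀, r₁, r₂) lies in the ℤ-span of the vectors (d, 0, −d) and (0, d, −d). -/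
/-!
Evaluating the character on one factor at a time shows that it is trivial iff
`λ ↦ λ ^ (r₀ + r₁ + r₂)` is trivial on `ℂˣ` and each `ζ ↦ ζ ^ rᵢ` is trivial on `μ_d`, i.e. iff the
exponents of these groups, `0` and `d`, divide `r₀ + r₁ + r₂` and each `rᵢ`. The lattice spanned by
`(d, 0, -d)` and `(0, d, -d)` is cut out by exactly these conditions.
-/

theorem Int.prod_mem_span_pair_iff (d r₀ r₁ r₂ : ℤ) :
    ((r₀, r₁, r₂) : ℤ × ℤ × ℤ) ∈ Submodule.span ℤ {((d, 0, -d) : ℤ × ℤ × ℤ), (0, d, -d)} ↔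
      r₀ + r₁ + r₂ = 0 ∧ d ∣ r₀ ∧ d ∣ r₁ ∧ d ∣ r₂ := by
  simp only [Submodule.mem_span_pair, Prod.smul_mk, smul_eq_mul, Prod.mk_add_mk, Prod.mk.injEq,
    mul_zero, add_zero, zero_add]
  constructor
  · rintro ⟨a, b, rfl, rfl, rfl⟩
    exact ⟨by ring, dvd_mul_left d a, dvd_mul_left d b, ⟨-(a + b), by ring⟩⟩
  · rintro ⟨hsum, ⟨a, rfl⟩, ⟨b, rfl⟩, -⟩
    exact ⟨a, b, mul_comm a d, mul_comm b d, by linarith⟩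

theorem forall_mul_zpow_eq_one_iff {G : Type*} [CommGroup G] (H : Subgroup G) (n r₀ r₁ r₂ : ℤ) :
    (∀ (l : G) (ζ₀ ζ₁ ζ₂ : H), l ^ n * (ζ₀ : G) ^ r₀ * (ζ₁ : G) ^ r₁ * (ζ₂ : G) ^ r₂ = 1) ↔
      (∀ l : G, l ^ n = 1) ∧ (∀ ζ : H, ζ ^ r₀ = 1) ∧ (∀ ζ : H, ζ ^ r₁ = 1) ∧
        ∀ ζ : H, ζ ^ r₂ = 1 := by
  constructor
  · intro h
    refine ⟨fun l ↦ ?_, fun ζ ↦ ?_, fun ζ ↦ ?_, fun ζ ↦ ?_⟩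
    · simpa using h l 1 1 1
    · exact Subtype.ext (by simpa using h 1 ζ 1 1)
    · exact Subtype.ext (by simpa using h 1 1 ζ 1)
    · exact Subtype.ext (by simpa using h 1 1 1 ζ)
  · rintro ⟨hl, h₀, h₁, h₂⟩ l ζ₀ ζ₁ ζ₂
    simp only [← Subgroup.coe_zpow, hl, h₀, h₁, h₂, OneMemClass.coe_one, mul_one]

theorem Complex.orderOf_units_mk0_two : orderOf (Units.mk0 (2 : ℂ) two_ne_zero) = 0 := by
  rw [← orderOf_units, orderOf_eq_zero_iff]
  intro h
  simpa using h.norm_eq_one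

theorem Complex.exponent_units : Monoid.exponent ℂˣ = 0 :=
  Monoid.exponent_eq_zero_of_order_zero Complex.orderOf_units_mk0_two

theorem Complex.exponent_rootsOfUnity (d : ℕ) : Monoid.exponent (rootsOfUnity d ℂ) = d := by
  rcases Nat.eq_zero_or_pos d with rfl | hd
  · -- `rootsOfUnity 0 ℂ` is all of `ℂˣ`
    refine Monoid.exponent_eq_zero_of_order_zero (g := ⟨Units.mk0 2 two_ne_zero, by simp⟩) ?_
    rw [Subgroup.orderOf_mk, Complex.orderOf_units_mk0_two]
  · have : NeZero d := ⟨hd.ne'⟩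
    rw [IsCyclic.exponent_eq_card, HasEnoughRootsOfUnity.natCard_rootsOfUnity]

theorem character_trivial_iff_span_general
    (d : ℕ) (r₀ r₁ r₂ : ℤ) :
    (∀ (l : ℂˣ) (ζ₀ ζ₁ ζ₂ : rootsOfUnity d ℂ),
        l ^ (r₀ + r₁ + r₂) * (ζ₀ : ℂˣ) ^ r₀ * (ζ₁ : ℂˣ) ^ r₁ * (ζ₂ : ℂˣ) ^ r₂ = 1) ↔
    ((r₀, r₁, r₂) : ℤ × ℤ × ℤ) ∈
      Submodule.span ℤ {(((d : ℤ), 0, -(d : ℤ)) : ℤ × ℤ × ℤ), ((0, (d : ℤ), -(d : ℤ)) : ℤ × ℤ × ℤ)} := by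
  rw [forall_mul_zpow_eq_one_iff, Int.prod_mem_span_pair_iff]
  simp only [← Group.exponent_dvd_iff_forall_zpow_eq_one, Complex.exponent_units,
    Complex.exponent_rootsOfUnity, Nat.cast_zero, zero_dvd_iff]

/-- The character `χ_r : ℂˣ × μ_d × μ_d × μ_d → ℂˣ`,
`(λ, ζ₀, ζ₁, ζ₂) ↦ λ^(r₀+r₁+r₂) ζ₀^{r₀} ζ₁^{r₁} ζ₂^{r₂}`, is trivial if and only if
`(r₀,r₁,r₂)` lies in the `ℤ`-span of `(d,0,-d)` and `(0,d,-d)`.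
This is the statement that the `G`-equivariant line bundle
`𝒪^G_{P²}(r₀D₀+r₁D₁+r₂D₂)` is trivial iff `(r₀,r₁,r₂) ∈ ⟨(d,0,-d),(0,d,-d)⟩`. -/
theorem character_trivial_iff_span
    (d : ℕ) (hd : 1 ≤ d) (r₀ r₁ r₂ : ℤ) :
    (∀ (l : ℂˣ) (ζ₀ ζ₁ ζ₂ : rootsOfUnity d ℂ),
        l ^ (r₀ + r₁ + r₂) * (ζ₀ : ℂˣ) ^ r₀ * (ζ₁ : ℂˣ) ^ r₁ * (ζ₂ : ℂˣ) ^ r₂ = 1) ↔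
    ((r₀, r₁, r₂) : ℤ × ℤ × ℤ) ∈
      Submodule.span ℤ {(((d : ℤ), 0, -(d : ℤ)) : ℤ × ℤ × ℤ), ((0, (d : ℤ), -(d : ℤ)) : ℤ × ℤ × ℤ)} :=
  character_trivial_iff_span_general d r₀ r₁ r₂
end

section
/- Let d ≥ 2 be an integer, a, b : Fin d → ℂ, and x₀, x₁ ∈ ℂ. Then det K(a,b,x₀,x₁) = x₀^d·(∏_{i} a_i) + (−1)^{d−1}·x₁^d·(∏_i b_i). -/
/-!
Expand the determinant by the Leibniz formula. The entry `K i j` vanishes unless `i = j` or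
`i = j + 1`, and a permutation `σ` with `σ i ∈ {i, i + 1}` for all `i` is either the identity or
the cyclic rotation `i ↦ i + 1`: once `σ i = i + 1`, injectivity forces `σ (i + 1) = i + 2`, and
so on around the cycle. The identity contributes `∏ a i x₀` and the rotation, a `d`-cycle of sign
`(-1)^(d-1)`, contributes `(-1)^(d-1) ∏ b i x₁`; for `d ≥ 2` these two permutations are distinct.
-/

/-- The Kasteleyn matrix `K̃_α(x)` of a zig-zag path at the line at infinity `x₂ = 0`:
the `d × d` matrix with `(i,i)` entry `a i * x₀`, `(i+1, i)` entry `b i * x₁`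
(row index cyclic modulo `d`), and all other entries `0`. -/
def Kmat (d : ℕ) [NeZero d] (a b : Fin d → ℂ) (x₀ x₁ : ℂ) : Matrix (Fin d) (Fin d) ℂ :=
  fun i j => if i = j then a j * x₀ else if i = j + 1 then b j * x₁ else 0

open Equiv Finset

namespace Fin

variable {d : ℕ} [NeZero d]

theorem add_one_ne_self (hd : 2 ≤ d) (i : Fin d) : i + 1 ≠ i := by
  rw [Ne, add_eq_left, one_eq_zero_iff]
  omega

theorem one_ne_finRotate (hd : 2 ≤ d) : (1 : Perm (Fin d)) ≠ finRotate d := fun h =>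
  add_one_ne_self hd 0 (by simpa [finRotate_apply] using (congrArg (· 0) h).symm)

open Fin.NatCast in
theorem perm_eq_one_or_finRotate {σ : Perm (Fin d)} (hσ : ∀ i, σ i = i ∨ σ i = i + 1) :
    σ = 1 ∨ σ = finRotate d := by
  by_cases hfix : ∀ i, σ i = i
  · exact .inl (Perm.ext hfix)
  push Not at hfix
  obtain ⟨i, hi⟩ := hfix
  have hshift : ∀ k : ℕ, σ (i + (k : Fin d)) = i + (k : Fin d) + 1 := by
    intro k
    induction k with
    | zero => simpa using (hσ i).resolve_left hi
    | succ k ih =>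
      rw [Nat.cast_succ, ← add_assoc]
      rcases hσ (i + k + 1) with hfix | hstep
      · have hcollide : i + k + 1 = i + k := σ.injective (hfix.trans ih.symm)
        rw [hcollide]
        exact ih
      · exact hstep
  refine .inr (Perm.ext fun j => ?_)
  simpa [finRotate_apply] using hshift (j - i : Fin d)

end Fin

theorem Matrix.det_of_eq_zero_off_cyclic_bidiagonal {R : Type*} [CommRing R] {d : ℕ} [NeZero d]
    (hd : 2 ≤ d) (M : Matrix (Fin d) (Fin d) R) (hM : ∀ i j, i ≠ j → i ≠ j + 1 → M i j = 0) :
    M.det = ∏ i, M i i + (-1) ^ (d - 1) * ∏ i, M (i + 1) i := by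
  rw [Matrix.det_apply, ← sum_subset (subset_univ {1, finRotate d}),
    sum_pair (Fin.one_ne_finRotate hd)]
  · simp [sign_finRotate, finRotate_apply, Units.smul_def]
  · intro σ _ hσ
    have hoff : ∃ i, σ i ≠ i ∧ σ i ≠ i + 1 := by
      by_contra! h
      exact hσ (by simpa using Fin.perm_eq_one_or_finRotate fun i => or_iff_not_imp_left.2 (h i))
    obtain ⟨i, hi₀, hi₁⟩ := hoff
    rw [prod_eq_zero (f := fun j => M (σ j) j) (mem_univ i) (hM _ _ hi₀ hi₁), smul_zero]

/-- `det K̃_α(x) = x₀^d ∏ aᵢ + (-1)^(d-1) x₁^d ∏ bᵢ`. -/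
theorem det_Kmat (d : ℕ) [NeZero d] (hd : 2 ≤ d) (a b : Fin d → ℂ) (x₀ x₁ : ℂ) :
    (Kmat d a b x₀ x₁).det =
      x₀ ^ d * (∏ i, a i) + (-1 : ℂ) ^ (d - 1) * x₁ ^ d * (∏ i, b i) := by
  rw [Matrix.det_of_eq_zero_off_cyclic_bidiagonal hd _ fun i j h₀ h₁ => by simp [Kmat, h₀, h₁]]
  simp only [Kmat, if_true, if_neg (Fin.add_one_ne_self hd _), prod_mul_distrib, prod_const,
    card_univ, Fintype.card_fin]
  ring
end

section
/- Let d ≥ 2 be an integer, a, b : Fin d → ℂ, and x₀, x₁ ∈ ℂ, with a_i ≠ 0 and b_i ≠ 0 for all i, x₀ ≠ 0, x₁ ≠ 0, and x₀^d·(∏_i a_i) = (−1)^d·x₁^d·(∏_i b_i). Then there exist invertible diagonal d×d complex matrices Ψ and Φ such that Ψ · K(a,b,x₀,x₁) · Φ⁻¹ = 1^#_d. (This is the existence of the trivializations Φ_{α̃ᵢ}, Ψ_{α̃ᵢ} at a point at infinity α̃ᵢ of the spectral curve, which transform the Kasteleyn matrix of a zig-zag path into the standard matrix 1^#_α.) 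-/
/-- The standard matrix `1^#_d`: `(i,i)` entry `1`, `(i+1, i)` entry `-1`
(row index cyclic modulo `d`), all other entries `0`. -/
def oneSharp (d : ℕ) [NeZero d] : Matrix (Fin d) (Fin d) ℂ :=
  fun i j => if i = j then 1 else if i = j + 1 then -1 else 0

/-!
With `Ψ = diagonal ψ` and `Φ = diagonal φ`, the identity `Ψ * K = 1^# * Φ` says
`ψ i * a i x₀ = φ i` and `ψ (j + 1) * b j x₁ = -φ j`, i.e. `φ (j + 1) = φ j * r j` with
`r j = -a (j + 1) x₀ / (b j x₁)`. Solving this recursion around the cycle `Fin d` is possible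
exactly when `∏ r j = 1`, and that product is `(-1)^d x₀^d ∏ aᵢ / (x₁^d ∏ bᵢ)`.
-/

open Finset Matrix

theorem Fin.exists_add_one_eq_mul_of_prod_eq_one {M : Type*} [CommGroup M] {d : ℕ} [NeZero d]
    (r : Fin d → M) (hr : ∏ i, r i = 1) : ∃ φ : Fin d → M, ∀ j, φ (j + 1) = φ j * r j := by
  obtain ⟨n, rfl⟩ : ∃ n, d = n + 1 := Nat.exists_eq_succ_of_ne_zero (NeZero.ne d)
  refine ⟨fun i => partialProd r i.castSucc, fun j => ?_⟩
  dsimp only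
  induction j using Fin.lastCases with
  | last =>
    rw [Fin.last_add_one, Fin.castSucc_zero, partialProd_zero, ← partialProd_succ, Fin.succ_last,
      partialProd, Fin.val_last, List.take_of_length_le (by simp), List.prod_ofFn, hr]
  | cast i =>
    simp only [Fin.coeSucc_eq_succ, ← Fin.succ_castSucc, partialProd_succ]

theorem Fin.prod_neg_add_one_div_eq_one {K : Type*} [Field K] {d : ℕ} [NeZero d]
    (α β : Fin d → K) (hβ : ∀ i, β i ≠ 0) (h : ∏ i, α i = (-1) ^ d * ∏ i, β i) :
    ∏ j, -α (j + 1) / β j = 1 := by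
  have hshift : ∏ j, α (j + 1) = ∏ j, α j := Equiv.prod_comp (Equiv.addRight 1) α
  rw [prod_div_distrib, div_eq_one_iff_eq (prod_ne_zero_iff.2 fun i _ => hβ i), prod_neg,
    card_univ, Fintype.card_fin, hshift, h, ← mul_assoc, ← mul_pow, neg_one_mul, neg_neg,
    one_pow, one_mul]

theorem diagonal_mul_Kmat_eq_oneSharp_mul_diagonal {d : ℕ} [NeZero d] {a b : Fin d → ℂ}
    {x₀ x₁ : ℂ} {ψ φ : Fin d → ℂ} (hdiag : ∀ i, ψ i * (a i * x₀) = φ i)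
    (hsub : ∀ j, ψ (j + 1) * (b j * x₁) = -φ j) :
    diagonal ψ * Kmat d a b x₀ x₁ = oneSharp d * diagonal φ := by
  ext i j
  simp only [diagonal_mul, mul_diagonal, Kmat, oneSharp]
  split_ifs with hij hsucc
  · rw [hij, hdiag, one_mul]
  · rw [hsucc, hsub, neg_one_mul]
  · rw [mul_zero, zero_mul]

theorem exists_trivialization_general (d : ℕ) [NeZero d] (a b : Fin d → ℂ)
    (x₀ x₁ : ℂ) (ha : ∀ i, a i ≠ 0) (hb : ∀ i, b i ≠ 0) (hx₀ : x₀ ≠ 0) (hx₁ : x₁ ≠ 0)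
    (h : x₀ ^ d * (∏ i, a i) = (-1 : ℂ) ^ d * x₁ ^ d * (∏ i, b i)) :
    ∃ Ψ Φ : Matrix (Fin d) (Fin d) ℂ,
      Ψ.IsDiag ∧ Φ.IsDiag ∧ IsUnit Ψ ∧ IsUnit Φ ∧
      Ψ * Kmat d a b x₀ x₁ * Φ⁻¹ = oneSharp d := by
  have hα : ∀ i, a i * x₀ ≠ 0 := fun i => mul_ne_zero (ha i) hx₀
  have hβ : ∀ i, b i * x₁ ≠ 0 := fun i => mul_ne_zero (hb i) hx₁
  have hprod : ∏ j, -(a (j + 1) * x₀) / (b j * x₁) = 1 :=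
    Fin.prod_neg_add_one_div_eq_one (fun i => a i * x₀) _ hβ <| by
      simp only [prod_mul_distrib, prod_const, card_univ, Fintype.card_fin]
      linear_combination h
  obtain ⟨φ, hφ⟩ := Fin.exists_add_one_eq_mul_of_prod_eq_one
    (fun j => Units.mk0 _ (div_ne_zero (neg_ne_zero.2 (hα (j + 1))) (hβ j)))
    (Units.ext <| by simpa using hprod)
  have hΦ : IsUnit (diagonal fun i => (φ i : ℂ)) :=
    isUnit_diagonal.2 <| Pi.isUnit_iff.2 fun i => (φ i).isUnit
  have hΨK : diagonal (fun i => φ i / (a i * x₀)) * Kmat d a b x₀ x₁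
      = oneSharp d * diagonal fun i => (φ i : ℂ) := by
    refine diagonal_mul_Kmat_eq_oneSharp_mul_diagonal (fun i => div_mul_cancel₀ _ (hα i))
      fun j => ?_
    rw [hφ j, Units.val_mul, Units.val_mk0]
    field_simp [ha (j + 1), hb j]
  refine ⟨_, _, isDiag_diagonal _, isDiag_diagonal _,
    isUnit_diagonal.2 <| Pi.isUnit_iff.2 fun i => ((φ i).isUnit.div (hα i).isUnit), hΦ, ?_⟩
  rw [hΨK, mul_nonsing_inv_cancel_right _ _ ((isUnit_iff_isUnit_det _).1 hΦ)]

/-- At a singular point at infinity (`x₀^d ∏ aᵢ = (-1)^d x₁^d ∏ bᵢ`), there exist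
invertible diagonal matrices `Ψ`, `Φ` trivializing the Kasteleyn matrix of the zig-zag
path: `Ψ ⬝ K̃_α(x) ⬝ Φ⁻¹ = 1^#_d`. -/
theorem exists_trivialization (d : ℕ) [NeZero d] (hd : 2 ≤ d) (a b : Fin d → ℂ)
    (x₀ x₁ : ℂ) (ha : ∀ i, a i ≠ 0) (hb : ∀ i, b i ≠ 0) (hx₀ : x₀ ≠ 0) (hx₁ : x₁ ≠ 0)
    (h : x₀ ^ d * (∏ i, a i) = (-1 : ℂ) ^ d * x₁ ^ d * (∏ i, b i)) :
    ∃ Ψ Φ : Matrix (Fin d) (Fin d) ℂ,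
      Ψ.IsDiag ∧ Φ.IsDiag ∧ IsUnit Ψ ∧ IsUnit Φ ∧
      Ψ * Kmat d a b x₀ x₁ * Φ⁻¹ = oneSharp d :=
  exists_trivialization_general d a b x₀ x₁ ha hb hx₀ hx₁ h
end

section
/- Let d ≥ 2 be an integer, a, b : Fin d → ℂ, x₀, x₁ ∈ ℂ, and suppose Ψ and Φ are invertible diagonal d×d complex matrices with Ψ · K(a,b,x₀,x₁) · Φ⁻¹ = 1^#_d. Then the range (column space) of K(a,b,x₀,x₁) equals {v ∈ ℂ^d : ∑_i (Ψ v)_i = 0}, and the linear functional v ↦ ∑_i (Ψ v)_i induces an isomorphism from the cokernel of K(a,b,x₀,x₁) to ℂ. -/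
/-- The linear functional `v ↦ ∑ᵢ vᵢ` on `ℂ^d`. -/
noncomputable def sumLM (d : ℕ) : (Fin d → ℂ) →ₗ[ℂ] ℂ where
  toFun v := ∑ i, v i
  map_add' u v := by simp [Finset.sum_add_distrib]
  map_smul' c v := by simp [Finset.mul_sum]

open Matrix LinearMap Finset

section Conjugation

variable {R n : Type*} [CommRing R] [Fintype n] [DecidableEq n]

lemma Matrix.bijective_toLin'_of_isUnit {Φ : Matrix n n R} (hΦ : IsUnit Φ) :
    Function.Bijective (toLin' Φ) :=
  (Module.End.isUnit_iff _).mp (hΦ.map toLinAlgEquiv')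

lemma Matrix.range_toLin'_eq_comap_of_conj_eq {A K Ψ Φ : Matrix n n R} (hΨ : IsUnit Ψ)
    (hΦ : IsUnit Φ) (h : Ψ * K * Φ⁻¹ = A) :
    range (toLin' K) = (range (toLin' A)).comap (toLin' Ψ) := by
  have hΦinv : Function.Surjective (toLin' Φ⁻¹) :=
    (bijective_toLin'_of_isUnit (isUnit_nonsing_inv_iff.mpr hΦ)).surjective
  rw [← h, toLin'_mul, range_comp_of_range_eq_top _ (range_eq_top.mpr hΦinv), toLin'_mul,
    range_comp, Submodule.comap_map_eq_of_injective (bijective_toLin'_of_isUnit hΨ).injective]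

end Conjugation

namespace Fin

variable {d : ℕ} [NeZero d]

lemma Iic_zero_sub_one : Iic (0 - 1 : Fin d) = univ := by
  obtain ⟨n, rfl⟩ : ∃ n, d = n + 1 := ⟨d - 1, by have := NeZero.ne d; omega⟩
  refine eq_univ_of_forall fun k => mem_Iic.mpr (le_def.mpr ?_)
  rw [zero_sub, coe_neg_one]
  omega

lemma sum_Iic_zero {M : Type*} [AddCommMonoid M] (v : Fin d → M) :
    ∑ k ∈ Iic 0, v k = v 0 := by
  rw [Iic_eq_cons_Iio, Finset.sum_cons, Iio_eq_empty.mpr fun k _ => zero_le k, sum_empty,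
    add_zero]

lemma sub_one_ne_self (hd : 2 ≤ d) (i : Fin d) : i - 1 ≠ i := by
  intro hi
  have := congrArg val (sub_eq_self.mp hi)
  simp [Nat.mod_eq_of_lt (by omega : 1 < d)] at this

end Fin

section OneSharp

variable {d : ℕ} [NeZero d]

lemma oneSharp_mulVec_apply (hd : 2 ≤ d) (u : Fin d → ℂ) (i : Fin d) :
    (oneSharp d *ᵥ u) i = u i - u (i - 1) := by
  have hentry (j : Fin d) :
      oneSharp d i j = (if j = i then 1 else 0) - (if j = i - 1 then 1 else 0) := by
    have hshift : i = j + 1 ↔ j = i - 1 := by rw [eq_sub_iff_add_eq, eq_comm]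
    simp only [oneSharp, hshift, @eq_comm _ i j]
    rcases eq_or_ne j i with rfl | hji
    · simp [(Fin.sub_one_ne_self hd j).symm]
    · rw [if_neg hji, if_neg hji, zero_sub]
      split_ifs <;> simp
  simp only [mulVec, dotProduct, hentry, sub_mul, ite_mul, one_mul, zero_mul, sum_sub_distrib,
    sum_ite_eq', mem_univ, if_true]

lemma range_toLin'_oneSharp (hd : 2 ≤ d) : range (toLin' (oneSharp d)) = ker (sumLM d) := by
  apply le_antisymm
  · rintro _ ⟨u, rfl⟩
    change ∑ i, (oneSharp d *ᵥ u) i = 0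
    simp only [oneSharp_mulVec_apply hd, sum_sub_distrib]
    rw [Fintype.sum_equiv (Equiv.subRight 1) (fun i => u (i - 1)) u fun _ => rfl, sub_self]
  · intro v hv
    refine ⟨fun i => ∑ k ∈ Iic i, v k, funext fun i => ?_⟩
    rw [toLin'_apply, oneSharp_mulVec_apply hd]
    rcases eq_or_ne i 0 with rfl | hi
    · rw [Fin.sum_Iic_zero, Fin.Iic_zero_sub_one, show ∑ k, v k = 0 from hv, sub_zero]
    · rw [Fin.Iic_sub_one_eq_Iio (Fin.pos_iff_ne_zero.mpr hi), Iic_eq_cons_Iio, sum_cons,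
        add_sub_cancel_right]

lemma sumLM_surjective : Function.Surjective (sumLM d) :=
  fun c => ⟨Pi.single 0 c, by simp [sumLM]⟩

end OneSharp

theorem Kmat_coker_iso_general (d : ℕ) [NeZero d] (hd : 2 ≤ d) (a b : Fin d → ℂ)
    (x₀ x₁ : ℂ) (Ψ Φ : Matrix (Fin d) (Fin d) ℂ)
    (hΨ : IsUnit Ψ) (hΦ : IsUnit Φ)
    (h : Ψ * Kmat d a b x₀ x₁ * Φ⁻¹ = oneSharp d) :
    LinearMap.range (Matrix.toLin' (Kmat d a b x₀ x₁)) =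
      LinearMap.ker ((sumLM d).comp (Matrix.toLin' Ψ)) ∧
    ∃ e : ((Fin d → ℂ) ⧸ LinearMap.range (Matrix.toLin' (Kmat d a b x₀ x₁))) ≃ₗ[ℂ] ℂ,
      ∀ v : Fin d → ℂ, e (Submodule.Quotient.mk v) = ∑ i, Ψ.mulVec v i := by
  have hrange : range (toLin' (Kmat d a b x₀ x₁)) = ker ((sumLM d).comp (toLin' Ψ)) := by
    rw [range_toLin'_eq_comap_of_conj_eq hΨ hΦ h, range_toLin'_oneSharp hd, ker_comp]
  have hsurj : Function.Surjective ((sumLM d).comp (toLin' Ψ)) :=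
    sumLM_surjective.comp (bijective_toLin'_of_isUnit hΨ).surjective
  refine ⟨hrange, (Submodule.quotEquivOfEq _ _ hrange).trans
    (quotKerEquivOfSurjective _ hsurj), fun _ => rfl⟩

/-- If `Ψ ⬝ K̃_α(x) ⬝ Φ⁻¹ = 1^#_d` for invertible diagonal matrices `Ψ`, `Φ`, then the
column space of `K̃_α(x)` is `{v : ∑ᵢ (Ψv)ᵢ = 0}`, and the functional `v ↦ ∑ᵢ (Ψv)ᵢ`
induces an isomorphism from the cokernel of `K̃_α(x)` to `ℂ`. -/
theorem Kmat_coker_iso (d : ℕ) [NeZero d] (hd : 2 ≤ d) (a b : Fin d → ℂ)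
    (x₀ x₁ : ℂ) (Ψ Φ : Matrix (Fin d) (Fin d) ℂ)
    (hΨd : Ψ.IsDiag) (hΦd : Φ.IsDiag) (hΨ : IsUnit Ψ) (hΦ : IsUnit Φ)
    (h : Ψ * Kmat d a b x₀ x₁ * Φ⁻¹ = oneSharp d) :
    LinearMap.range (Matrix.toLin' (Kmat d a b x₀ x₁)) =
      LinearMap.ker ((sumLM d).comp (Matrix.toLin' Ψ)) ∧
    ∃ e : ((Fin d → ℂ) ⧸ LinearMap.range (Matrix.toLin' (Kmat d a b x₀ x₁))) ≃ₗ[ℂ] ℂ,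
      ∀ v : Fin d → ℂ, e (Submodule.Quotient.mk v) = ∑ i, Ψ.mulVec v i :=
  Kmat_coker_iso_general d hd a b x₀ x₁ Ψ Φ hΨ hΦ h
end

section
/- Let d ≥ 2 be an integer, a, b : Fin d → ℂ with all a_i ≠ 0 and all b_i ≠ 0, and x₀, x₁ ∈ ℂ. Suppose Ψ and Φ are invertible diagonal d×d complex matrices with Ψ · K(a,b,x₀,x₁) · Φ⁻¹ = 1^#_d. Then for any ȧ, ḃ : Fin d → ℂ, the matrix Ψ · K(ȧ,ḃ,x₀,x₁) · Φ⁻¹ has (i,i) entry ȧ_i/a_i, (i+1, i) entry −ḃ_i/b_i (row index cyclically modulo d), and all other entries 0; consequently the row vector (1,…,1) · Ψ · K(ȧ,ḃ,x₀,x₁) · Φ⁻¹ has j-th entry ȧ_j/a_j − ḃ_j/b_j. (This is the lemma computing the map Hom(ℰ,ℱ)^G → Hom(ℰ, ℒ|_D)^G on a zig-zag path in terms of logarithmic derivatives of the edge weights.) -/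
/-!
Conjugating by diagonal matrices only rescales entries, so it commutes with entrywise
(Hadamard) multiplication. Since `K(ȧ,ḃ) = K(a,b) ⊙ K(ȧ/a, ḃ/b, 1, 1)`, the hypothesis turns
`Ψ K(ȧ,ḃ) Φ⁻¹` into `1^#_d ⊙ K(ȧ/a, ḃ/b, 1, 1)`. For `d ≥ 2` the diagonal and the cyclic
subdiagonal are disjoint, so each column sum has exactly the two terms `ȧⱼ/aⱼ` and `-ḃⱼ/bⱼ`.
-/

open Matrix

theorem Matrix.diagonal_mul_hadamard_mul_diagonal {n α : Type*} [Fintype n] [DecidableEq n]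
    [CommSemiring α] (p q : n → α) (A B : Matrix n n α) :
    diagonal p * (A ⊙ B) * diagonal q = (diagonal p * A * diagonal q) ⊙ B := by
  ext i j
  simp only [mul_diagonal, diagonal_mul, hadamard_apply]
  ring

theorem Fin.add_one_ne_self_s12 {d : ℕ} [NeZero d] (hd : 2 ≤ d) (j : Fin d) : j + 1 ≠ j := by
  intro hj
  have : (1 : Fin d) = 0 := by simpa using congrArg (· - j) hj
  rw [Fin.one_eq_zero_iff] at this
  omega

theorem Kmat_eq_hadamard_div (d : ℕ) [NeZero d] {a b : Fin d → ℂ} (ha : ∀ i, a i ≠ 0)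
    (hb : ∀ i, b i ≠ 0) (a' b' : Fin d → ℂ) (x₀ x₁ : ℂ) :
    Kmat d a' b' x₀ x₁ = Kmat d a b x₀ x₁ ⊙ Kmat d (a' / a) (b' / b) 1 1 := by
  ext i j
  simp only [Kmat, hadamard_apply, Pi.div_apply, mul_one]
  split_ifs
  · field_simp [ha j]
  · field_simp [hb j]
  · simp

theorem oneSharp_hadamard_Kmat (d : ℕ) [NeZero d] (u v : Fin d → ℂ) :
    oneSharp d ⊙ Kmat d u v 1 1 =
      fun i j => if i = j then u j else if i = j + 1 then -v j else 0 := by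
  ext i j
  simp only [oneSharp, Kmat, hadamard_apply, mul_one]
  split_ifs <;> simp

theorem sum_ite_eq_ite_eq_of_ne {ι M : Type*} [Fintype ι] [DecidableEq ι] [AddCommMonoid M]
    {j k : ι} (hjk : j ≠ k) (u v : M) :
    ∑ i, (if i = j then u else if i = k then v else 0) = u + v := by
  rw [Fintype.sum_eq_add j k hjk (fun i hi => by simp [hi.1, hi.2])]
  simp [hjk.symm]

theorem trivialized_Kmat_deformation_general (d : ℕ) [NeZero d] (hd : 2 ≤ d)
    (a b : Fin d → ℂ) (ha : ∀ i, a i ≠ 0) (hb : ∀ i, b i ≠ 0) (x₀ x₁ : ℂ)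
    (Ψ Φ : Matrix (Fin d) (Fin d) ℂ)
    (hΨd : Ψ.IsDiag) (hΦd : Φ.IsDiag)
    (h : Ψ * Kmat d a b x₀ x₁ * Φ⁻¹ = oneSharp d) (adot bdot : Fin d → ℂ) :
    (Ψ * Kmat d adot bdot x₀ x₁ * Φ⁻¹ =
      fun i j => if i = j then adot j / a j
        else if i = j + 1 then -(bdot j / b j) else 0) ∧
    (∀ j : Fin d,
      Matrix.vecMul (fun _ => (1 : ℂ)) (Ψ * Kmat d adot bdot x₀ x₁ * Φ⁻¹) j =
        adot j / a j - bdot j / b j) := by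
  have hentries : Ψ * Kmat d adot bdot x₀ x₁ * Φ⁻¹ =
      fun i j => if i = j then adot j / a j
        else if i = j + 1 then -(bdot j / b j) else 0 := by
    rw [← hΨd.diagonal_diag, ← hΦd.diagonal_diag, inv_diagonal] at h ⊢
    rw [Kmat_eq_hadamard_div d ha hb adot bdot, diagonal_mul_hadamard_mul_diagonal, h,
      oneSharp_hadamard_Kmat]
    rfl
  refine ⟨hentries, fun j => ?_⟩
  simp only [hentries, vecMul, dotProduct, one_mul]
  rw [sum_ite_eq_ite_eq_of_ne (Fin.add_one_ne_self_s12 hd j).symm, sub_eq_add_neg]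

/-- If `Ψ ⬝ K(a,b,x₀,x₁) ⬝ Φ⁻¹ = 1^#_d` for invertible diagonal `Ψ`, `Φ`, then for any
`ȧ, ḃ` the matrix `Ψ ⬝ K(ȧ,ḃ,x₀,x₁) ⬝ Φ⁻¹` has `(i,i)` entry `ȧᵢ/aᵢ`, `(i+1,i)` entry
`−ḃᵢ/bᵢ`, and all other entries `0`; consequently the row vector
`(1,…,1) ⬝ Ψ ⬝ K(ȧ,ḃ,x₀,x₁) ⬝ Φ⁻¹` has `j`-th entry `ȧⱼ/aⱼ − ḃⱼ/bⱼ`. -/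
theorem trivialized_Kmat_deformation (d : ℕ) [NeZero d] (hd : 2 ≤ d)
    (a b : Fin d → ℂ) (ha : ∀ i, a i ≠ 0) (hb : ∀ i, b i ≠ 0) (x₀ x₁ : ℂ)
    (Ψ Φ : Matrix (Fin d) (Fin d) ℂ)
    (hΨd : Ψ.IsDiag) (hΦd : Φ.IsDiag) (hΨ : IsUnit Ψ) (hΦ : IsUnit Φ)
    (h : Ψ * Kmat d a b x₀ x₁ * Φ⁻¹ = oneSharp d) (adot bdot : Fin d → ℂ) :
    (Ψ * Kmat d adot bdot x₀ x₁ * Φ⁻¹ =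
      fun i j => if i = j then adot j / a j
        else if i = j + 1 then -(bdot j / b j) else 0) ∧
    (∀ j : Fin d,
      Matrix.vecMul (fun _ => (1 : ℂ)) (Ψ * Kmat d adot bdot x₀ x₁ * Φ⁻¹) j =
        adot j / a j - bdot j / b j) :=
  trivialized_Kmat_deformation_general d hd a b ha hb x₀ x₁ Ψ Φ hΨd hΦd h adot bdot
end
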